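/- arXiv:2506.08063 — 2 statements merged into one kernel-verified Lean document; each statement's English description precedes it below -/
import Mathlib

section
/- Let k and L be positive integers and let n ≥ L be an integer. Then (∑_{i=n-L+1}^{n} i^k) / (∑_{i=1}^{n} i^k) ≤ L(k+1)/n. In particular the contribution of the most recent L samples under power-of-natural-number weighting vanishes at rate O(1/n). -/
/-!
The last `L` weights are each at most `n ^ k`, so they sum to at most `L n ^ k`, while the total
weight `∑_{i=1}^n i ^ k` is an upper Riemann sum of the increasing function `x ^ k` on `[0, n]`
and hence at least `∫₀ⁿ x ^ k dx = n ^ (k + 1) / (k + 1)`.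
-/

open Finset

lemma sum_Ioc_sub_le_mul_of_monotone {f : ℕ → ℝ} (hf : Monotone f) (L n : ℕ) (hfn : 0 ≤ f n) :
    ∑ i ∈ Ioc (n - L) n, f i ≤ L * f n := by
  calc ∑ i ∈ Ioc (n - L) n, f i
      ≤ ∑ _i ∈ Ioc (n - L) n, f n := sum_le_sum fun i hi => hf (mem_Ioc.mp hi).2
    _ = #(Ioc (n - L) n) * f n := by rw [sum_const, nsmul_eq_mul]
    _ ≤ L * f n := by
      gcongr
      rw [Nat.card_Ioc]
      omega

lemma pow_succ_div_le_sum_Icc_pow (k n : ℕ) :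
    (n : ℝ) ^ (k + 1) / (k + 1) ≤ ∑ i ∈ Icc 1 n, (i : ℝ) ^ k := by
  have hmono : MonotoneOn (fun x : ℝ => x ^ k) (Set.Icc 0 (0 + n)) :=
    fun x hx y _ hxy => pow_le_pow_left₀ hx.1 hxy k
  have h := hmono.integral_le_sum
  rw [zero_add, integral_pow, zero_pow k.succ_ne_zero, sub_zero] at h
  refine h.trans_eq ?_
  simp only [zero_add]
  rw [range_eq_Ico, sum_Ico_add' (fun i : ℕ => (i : ℝ) ^ k), zero_add, Ico_add_one_right_eq_Icc]

theorem alt_rvfl_weight_proportion_bound_general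
    (k L n : ℕ) :
    (∑ i ∈ Finset.Ioc (n - L) n, (i : ℝ) ^ k) / (∑ i ∈ Finset.Icc 1 n, (i : ℝ) ^ k)
      ≤ (L : ℝ) * (k + 1) / n := by
  rcases n.eq_zero_or_pos with rfl | hn
  · simp
  have hnR : (0 : ℝ) < n := by exact_mod_cast hn
  have hmono : Monotone fun i : ℕ => (i : ℝ) ^ k :=
    fun i j hij => pow_le_pow_left₀ i.cast_nonneg (by exact_mod_cast hij) k
  calc (∑ i ∈ Ioc (n - L) n, (i : ℝ) ^ k) / (∑ i ∈ Icc 1 n, (i : ℝ) ^ k)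
      ≤ (L * (n : ℝ) ^ k) / ((n : ℝ) ^ (k + 1) / (k + 1)) :=
        div_le_div₀ (by positivity) (sum_Ioc_sub_le_mul_of_monotone hmono L n (by positivity))
          (by positivity) (pow_succ_div_le_sum_Icc_pow k n)
    _ = L * (k + 1) / n := by
        field_simp
        ring

/-- Alt-RVFL: under power-of-natural-number weighting `i^k`, the proportion of the total
weight carried by the most recent `L` samples is at most `L(k+1)/n`; in particular it
vanishes at rate `O(1/n)`. -/
theorem alt_rvfl_weight_proportion_bound
    (k L n : ℕ) (hk : 0 < k) (hL : 0 < L) (hn : L ≤ n) :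
    (∑ i ∈ Finset.Ioc (n - L) n, (i : ℝ) ^ k) / (∑ i ∈ Finset.Icc 1 n, (i : ℝ) ^ k)
      ≤ (L : ℝ) * (k + 1) / n :=
  alt_rvfl_weight_proportion_bound_general k L n
end

section
/- Let λ > 0 and θ > 0 be real numbers, let Aₙ be a real n × d matrix, ΔA a real 1 × d matrix, Sₙ a real n × m matrix, ΔS a real 1 × m matrix, and Tₙ a real n × n matrix. Define Pₙ = (λI + AₙᵀTₙᵀTₙAₙ)^{-1}, Qₙ = AₙᵀTₙᵀTₙSₙ, W_bⁿ = PₙQₙ, ΔP = θ^{2n} Pₙ ΔAᵀ (1 + θ^{2n} ΔA Pₙ ΔAᵀ)^{-1} ΔA Pₙ, and ΔQ = θ^{2n} ΔAᵀ ΔS. Let A_{n+1} = [Aₙ; ΔA], S_{n+1} = [Sₙ; ΔS], T_{n+1} = diag(Tₙ, θⁿ), and W_b^{n+1} = (λI + A_{n+1}ᵀT_{n+1}ᵀT_{n+1}A_{n+1})^{-1} A_{n+1}ᵀT_{n+1}ᵀT_{n+1} S_{n+1}. Then W_b^{n+1} = W_bⁿ + Pₙ ΔQ − ΔP Qₙ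 − ΔP ΔQ. -/
/-!
Appending a sample of weight θⁿ adds the rank-one term θ^{2n} ΔAᵀ ΔA to the regularized
weighted Gram matrix λI + AᵀTᵀTA, and θ^{2n} ΔAᵀ ΔS to Q. Since λI + AᵀTᵀTA is positive
definite and θ^{2n} ≥ 0, the Woodbury identity applies and gives the new inverse as P − ΔP;
expanding (P − ΔP)(Q + ΔQ) is the update rule.
-/

open Matrix

namespace Matrix

theorem transpose_fromRows_mul_fromBlocks_mul_fromRows {α m₁ m₂ n p : Type*} [Semiring α]
    [Fintype m₁] [Fintype m₂] (A : Matrix m₁ n α) (ΔA : Matrix m₂ n α) (B : Matrix m₁ p α)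
    (ΔB : Matrix m₂ p α) (T : Matrix m₁ m₁ α) (D : Matrix m₂ m₂ α) :
    (fromRows A ΔA)ᵀ * (fromBlocks T 0 0 D)ᵀ * fromBlocks T 0 0 D * fromRows B ΔB =
      Aᵀ * Tᵀ * T * B + ΔAᵀ * Dᵀ * D * ΔB := by
  rw [transpose_fromRows, fromBlocks_transpose, transpose_zero, transpose_zero,
    fromCols_mul_fromBlocks, fromCols_mul_fromBlocks, fromCols_mul_fromRows]
  simp

variable {n : Type*} [Fintype n]

theorem add_mul_inv_eq_sub {α k : Type*} [DecidableEq n] [CommRing α] [Fintype k]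
    [DecidableEq k] (M : Matrix n n α) (U : Matrix n k α) (V : Matrix k n α) (hM : IsUnit M)
    (h : IsUnit (1 + V * M⁻¹ * U)) :
    (M + U * V)⁻¹ = M⁻¹ - M⁻¹ * U * (1 + V * M⁻¹ * U)⁻¹ * V * M⁻¹ := by
  simpa using add_mul_mul_inv_eq_sub M U 1 V hM isUnit_one (by simpa using h)

section PosDef

variable {K : Type*} [Field K] [PartialOrder K] [StarRing K] [StarOrderedRing K]

theorem posDef_smul_one_add_conjTranspose_mul_self {m : Type*} [DecidableEq n] [Fintype m]
    {c : K} (hc : 0 < c) (B : Matrix m n K) : (c • 1 + Bᴴ * B).PosDef :=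
  (PosDef.one.smul hc).add_posSemidef (posSemidef_conjTranspose_mul_self B)

theorem PosSemidef.isUnit_one_add_smul_mul_mul_conjTranspose {k : Type*} [Fintype k]
    [DecidableEq k] {P : Matrix n n K} (hP : P.PosSemidef) {t : K} (ht : 0 ≤ t)
    (V : Matrix k n K) : IsUnit (1 + t • (V * P * Vᴴ)) :=
  (PosDef.one.add_posSemidef ((hP.mul_mul_conjTranspose_same V).smul ht)).isUnit

end PosDef

end Matrix

theorem lite_rvfl_incremental_update_general
    {n d m : ℕ} (lam θ : ℝ) (hlam : 0 < lam)
    (A : Matrix (Fin n) (Fin d) ℝ) (ΔA : Matrix (Fin 1) (Fin d) ℝ)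
    (S : Matrix (Fin n) (Fin m) ℝ) (ΔS : Matrix (Fin 1) (Fin m) ℝ)
    (T : Matrix (Fin n) (Fin n) ℝ) :
    let P : Matrix (Fin d) (Fin d) ℝ :=
      (lam • (1 : Matrix (Fin d) (Fin d) ℝ) + Aᵀ * Tᵀ * T * A)⁻¹
    let Q : Matrix (Fin d) (Fin m) ℝ := Aᵀ * Tᵀ * T * S
    let Wb : Matrix (Fin d) (Fin m) ℝ := P * Q
    let ΔP : Matrix (Fin d) (Fin d) ℝ :=
      θ ^ (2 * n) • (P * ΔAᵀ *
        ((1 : Matrix (Fin 1) (Fin 1) ℝ) + θ ^ (2 * n) • (ΔA * P * ΔAᵀ))⁻¹ * ΔA * P)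
    let ΔQ : Matrix (Fin d) (Fin m) ℝ := θ ^ (2 * n) • (ΔAᵀ * ΔS)
    let A1 := Matrix.fromRows A ΔA
    let S1 := Matrix.fromRows S ΔS
    let T1 := Matrix.fromBlocks T 0 0 (θ ^ n • (1 : Matrix (Fin 1) (Fin 1) ℝ))
    let Wb1 : Matrix (Fin d) (Fin m) ℝ :=
      (lam • (1 : Matrix (Fin d) (Fin d) ℝ) + A1ᵀ * T1ᵀ * T1 * A1)⁻¹ *
        (A1ᵀ * T1ᵀ * T1 * S1)
    Wb1 = Wb + P * ΔQ - ΔP * Q - ΔP * ΔQ := by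
  intro P Q Wb ΔP ΔQ A1 S1 T1 Wb1
  have hgram {p : ℕ} (B : Matrix (Fin n) (Fin p) ℝ) (ΔB : Matrix (Fin 1) (Fin p) ℝ) :
      A1ᵀ * T1ᵀ * T1 * fromRows B ΔB = Aᵀ * Tᵀ * T * B + θ ^ (2 * n) • (ΔAᵀ * ΔB) := by
    rw [transpose_fromRows_mul_fromBlocks_mul_fromRows]
    simp [smul_smul, ← pow_add, two_mul]
  have hM : (lam • 1 + Aᵀ * Tᵀ * T * A).PosDef := by
    simpa [Matrix.mul_assoc] using posDef_smul_one_add_conjTranspose_mul_self hlam (T * A)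
  have hden : IsUnit (1 + θ ^ (2 * n) • (ΔA * P * ΔAᵀ)) := by
    simpa using hM.inv.posSemidef.isUnit_one_add_smul_mul_mul_conjTranspose
      ((even_two_mul n).pow_nonneg θ) ΔA
  have hinv : (lam • 1 + A1ᵀ * T1ᵀ * T1 * A1)⁻¹ = P - ΔP := by
    rw [hgram, ← add_assoc, ← Matrix.smul_mul, add_mul_inv_eq_sub _ _ _ hM.isUnit]
    · simp [ΔP, P, Matrix.mul_assoc]
    · rwa [Matrix.mul_smul]
  calc Wb1 = (P - ΔP) * (Q + ΔQ) := by rw [← hinv, ← hgram]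
    _ = Wb + P * ΔQ - ΔP * Q - ΔP * ΔQ := by
      rw [Matrix.sub_mul, Matrix.mul_add, Matrix.mul_add]; abel

/-- Lite-RVFL incremental update rule (Theorem 1 of the paper): the new output weights
`W_b^{n+1}` computed from the stacked data satisfy
`W_b^{n+1} = W_bⁿ + Pₙ ΔQ - ΔP Qₙ - ΔP ΔQ`. -/
theorem lite_rvfl_incremental_update
    {n d m : ℕ} (lam θ : ℝ) (hlam : 0 < lam) (hθ : 0 < θ)
    (A : Matrix (Fin n) (Fin d) ℝ) (ΔA : Matrix (Fin 1) (Fin d) ℝ)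
    (S : Matrix (Fin n) (Fin m) ℝ) (ΔS : Matrix (Fin 1) (Fin m) ℝ)
    (T : Matrix (Fin n) (Fin n) ℝ) :
    let P : Matrix (Fin d) (Fin d) ℝ :=
      (lam • (1 : Matrix (Fin d) (Fin d) ℝ) + Aᵀ * Tᵀ * T * A)⁻¹
    let Q : Matrix (Fin d) (Fin m) ℝ := Aᵀ * Tᵀ * T * S
    let Wb : Matrix (Fin d) (Fin m) ℝ := P * Q
    let ΔP : Matrix (Fin d) (Fin d) ℝ :=
      θ ^ (2 * n) • (P * ΔAᵀ *
        ((1 : Matrix (Fin 1) (Fin 1) ℝ) + θ ^ (2 * n) • (ΔA * P * ΔAᵀ))⁻¹ * ΔA * P)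
    let ΔQ : Matrix (Fin d) (Fin m) ℝ := θ ^ (2 * n) • (ΔAᵀ * ΔS)
    let A1 := Matrix.fromRows A ΔA
    let S1 := Matrix.fromRows S ΔS
    let T1 := Matrix.fromBlocks T 0 0 (θ ^ n • (1 : Matrix (Fin 1) (Fin 1) ℝ))
    let Wb1 : Matrix (Fin d) (Fin m) ℝ :=
      (lam • (1 : Matrix (Fin d) (Fin d) ℝ) + A1ᵀ * T1ᵀ * T1 * A1)⁻¹ *
        (A1ᵀ * T1ᵀ * T1 * S1)
    Wb1 = Wb + P * ΔQ - ΔP * Q - ΔP * ΔQ :=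
  lite_rvfl_incremental_update_general lam θ hlam A ΔA S ΔS T
end
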